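/- arXiv:2509.21832 — 3 statements merged into one kernel-verified Lean document; each statement's English description precedes it below -/
import Mathlib

section
/- Let f : ℝ → ℝ be measurable with f(v) > 0 for a.e. v, and suppose f has finite moments ∫_ℝ f dv = ρ > 0, ∫_ℝ v f dv = ρu, ∫_ℝ (v−u)² f dv = ρT with T > 0. Let M = M[ρ,u,T] be the 1D Maxwellian with the same density, bulk velocity and temperature. Assume the integrals ∫_ℝ f |log f| dv, ∫_ℝ M |log f| dv, ∫_ℝ f |log M| dv and ∫_ℝ M |log M| dv are all finite. Then the BGK entropy inequality holds: ∫_ℝ (M(v) − f(v)) log f(v) dv ≤ 0. -/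
open MeasureTheory Real

/-- The 1D Maxwellian with density `ρ`, bulk velocity `u`, and temperature `T`. -/
noncomputable def maxwellian (ρ u T : ℝ) (v : ℝ) : ℝ :=
  ρ / Real.sqrt (2 * Real.pi * T) * Real.exp (-(v - u) ^ 2 / (2 * T))

/-!
`log M` is a combination of `1` and `(v - u)²`, and `f` has the same mass and temperature
moments as `M`, so `∫ (M - f) log M = 0`. Hence `∫ (M - f) log f = ∫ (M - f) (log f - log M)`,
whose integrand is pointwise nonpositive because `log` is monotone.
-/

open ProbabilityTheory
open scoped NNReal

lemma sub_mul_log_sub_log_nonpos {a b : ℝ} (ha : 0 < a) (hb : 0 < b) :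
    (b - a) * (log a - log b) ≤ 0 := by
  rcases le_total a b with hab | hba
  · exact mul_nonpos_of_nonneg_of_nonpos (sub_nonneg.2 hab) (sub_nonpos.2 (log_le_log ha hab))
  · exact mul_nonpos_of_nonpos_of_nonneg (sub_nonpos.2 hba) (sub_nonneg.2 (log_le_log hb hba))

section Entropy

variable {α : Type*} [MeasurableSpace α] {μ : Measure α} {f g : α → ℝ}

lemma integrable_sub_mul_log (hf : ∀ᵐ x ∂μ, 0 ≤ f x) (hg : ∀ᵐ x ∂μ, 0 ≤ g x)
    (hf_meas : AEStronglyMeasurable f μ) (hg_meas : AEStronglyMeasurable g μ)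
    (hflogf : Integrable (fun x => f x * |log (f x)|) μ)
    (hglogf : Integrable (fun x => g x * |log (f x)|) μ) :
    Integrable (fun x => (g x - f x) * log (f x)) μ := by
  have hlog_meas : AEStronglyMeasurable (fun x => log (f x)) μ :=
    (measurable_log.comp_aemeasurable hf_meas.aemeasurable).aestronglyMeasurable
  refine (hglogf.add hflogf).mono' ((hg_meas.sub hf_meas).mul hlog_meas) ?_
  filter_upwards [hf, hg] with x hfx hgx
  rw [Pi.add_apply, ← add_mul, norm_mul, norm_eq_abs]
  exact mul_le_mul_of_nonneg_right (abs_le.2 ⟨by linarith, by linarith⟩) (abs_nonneg _)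

lemma integral_sub_mul_log_nonpos (hf : ∀ᵐ x ∂μ, 0 < f x) (hg : ∀ᵐ x ∂μ, 0 < g x)
    (hint_f : Integrable (fun x => (g x - f x) * log (f x)) μ)
    (hint_g : Integrable (fun x => (g x - f x) * log (g x)) μ)
    (hzero : ∫ x, (g x - f x) * log (g x) ∂μ = 0) :
    ∫ x, (g x - f x) * log (f x) ∂μ ≤ 0 :=
  calc ∫ x, (g x - f x) * log (f x) ∂μ
      = ∫ x, (g x - f x) * (log (f x) - log (g x)) ∂μ := by
        simp_rw [mul_sub]
        rw [integral_sub hint_f hint_g, hzero, sub_zero]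
    _ ≤ 0 := integral_nonpos_of_ae <| by
        filter_upwards [hf, hg] with x hfx hgx
        exact sub_mul_log_sub_log_nonpos hfx hgx

end Entropy

lemma integral_sq_mul_gaussianPDFReal (μ : ℝ) {v : ℝ≥0} (hv : v ≠ 0) :
    ∫ x, (x - μ) ^ 2 * gaussianPDFReal μ v x = v := by
  rw [← variance_fun_id_gaussianReal (μ := μ) (v := v),
    variance_eq_integral measurable_id'.aemeasurable, integral_gaussianReal_eq_integral_smul hv,
    integral_id_gaussianReal]
  simp_rw [smul_eq_mul, mul_comm]

lemma integrable_sq_mul_gaussianPDFReal (μ : ℝ) (v : ℝ≥0) :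
    Integrable fun x => (x - μ) ^ 2 * gaussianPDFReal μ v x := by
  rcases eq_or_ne v 0 with rfl | hv
  · simp
  · exact .of_integral_ne_zero (by rw [integral_sq_mul_gaussianPDFReal μ hv]; exact_mod_cast hv)

section Maxwellian

variable {ρ u T : ℝ}

/-- For `T ≤ 0` both sides vanish: `√(2πT) = 0` and `T.toNNReal = 0`. -/
lemma maxwellian_eq_mul_gaussianPDFReal (ρ u T : ℝ) :
    maxwellian ρ u T = fun v => ρ * gaussianPDFReal u T.toNNReal v := by
  ext v
  rcases le_total T 0 with hT | hT
  · have hsqrt : √(2 * π * T) = 0 := sqrt_eq_zero'.2 (by nlinarith [pi_pos])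
    simp [maxwellian, gaussianPDFReal, hsqrt, Real.toNNReal_of_nonpos hT]
  · simp [maxwellian, gaussianPDFReal, Real.coe_toNNReal _ hT, div_eq_mul_inv, mul_assoc]

lemma maxwellian_pos (hρ : 0 < ρ) (hT : 0 < T) (v : ℝ) : 0 < maxwellian ρ u T v := by
  unfold maxwellian
  positivity

lemma log_maxwellian (hρ : 0 < ρ) (hT : 0 < T) (v : ℝ) :
    log (maxwellian ρ u T v) = log (ρ / √(2 * π * T)) - (v - u) ^ 2 / (2 * T) := by
  rw [maxwellian, log_mul (by positivity) (exp_pos _).ne', log_exp]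
  ring

lemma integrable_maxwellian (ρ u T : ℝ) : Integrable (maxwellian ρ u T) := by
  rw [maxwellian_eq_mul_gaussianPDFReal]
  exact (integrable_gaussianPDFReal _ _).const_mul ρ

lemma integrable_sq_mul_maxwellian (ρ u T : ℝ) :
    Integrable fun v => (v - u) ^ 2 * maxwellian ρ u T v := by
  simp_rw [maxwellian_eq_mul_gaussianPDFReal, mul_left_comm _ ρ]
  exact (integrable_sq_mul_gaussianPDFReal _ _).const_mul ρ

lemma integral_maxwellian (ρ u : ℝ) (hT : 0 < T) : ∫ v, maxwellian ρ u T v = ρ := by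
  rw [maxwellian_eq_mul_gaussianPDFReal, integral_const_mul,
    integral_gaussianPDFReal_eq_one _ (by simpa using hT), mul_one]

lemma integral_sq_mul_maxwellian (ρ u : ℝ) (hT : 0 < T) :
    ∫ v, (v - u) ^ 2 * maxwellian ρ u T v = ρ * T := by
  simp_rw [maxwellian_eq_mul_gaussianPDFReal, mul_left_comm _ ρ]
  rw [integral_const_mul, integral_sq_mul_gaussianPDFReal _ (by simpa using hT),
    Real.coe_toNNReal _ hT.le]

variable {f : ℝ → ℝ}

lemma sub_mul_log_maxwellian (hρ : 0 < ρ) (hT : 0 < T) :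
    (fun v => (maxwellian ρ u T v - f v) * log (maxwellian ρ u T v)) = fun v =>
      log (ρ / √(2 * π * T)) * (maxwellian ρ u T v - f v) -
        ((v - u) ^ 2 * maxwellian ρ u T v - (v - u) ^ 2 * f v) / (2 * T) := by
  ext v
  rw [log_maxwellian hρ hT]
  ring

lemma integrable_sub_mul_log_maxwellian (hρ : 0 < ρ) (hT : 0 < T) (hf : Integrable f)
    (hf₂ : Integrable fun v => (v - u) ^ 2 * f v) :
    Integrable fun v => (maxwellian ρ u T v - f v) * log (maxwellian ρ u T v) := by
  rw [sub_mul_log_maxwellian hρ hT]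
  exact (((integrable_maxwellian ρ u T).sub hf).const_mul _).sub
    (((integrable_sq_mul_maxwellian ρ u T).sub hf₂).div_const _)

lemma integral_sub_mul_log_maxwellian_eq_zero (hρ : 0 < ρ) (hT : 0 < T) (hf : Integrable f)
    (hf₂ : Integrable fun v => (v - u) ^ 2 * f v) (hmass : ∫ v, f v = ρ)
    (htemp : ∫ v, (v - u) ^ 2 * f v = ρ * T) :
    ∫ v, (maxwellian ρ u T v - f v) * log (maxwellian ρ u T v) = 0 := by
  have hM := integrable_maxwellian ρ u T
  have hM₂ := integrable_sq_mul_maxwellian ρ u T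
  have hdiff : Integrable fun v => maxwellian ρ u T v - f v := hM.sub hf
  have hdiff₂ : Integrable fun v => (v - u) ^ 2 * maxwellian ρ u T v - (v - u) ^ 2 * f v :=
    hM₂.sub hf₂
  rw [sub_mul_log_maxwellian hρ hT, integral_sub (hdiff.const_mul _) (hdiff₂.div_const _),
    integral_const_mul, integral_div, integral_sub hM hf, integral_sub hM₂ hf₂,
    integral_maxwellian ρ u hT, integral_sq_mul_maxwellian ρ u hT, hmass, htemp]
  simp

end Maxwellian

theorem bgk_entropy_inequality_general (f : ℝ → ℝ)
    (hf_pos : ∀ᵐ v : ℝ ∂volume, 0 < f v)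
    (ρ u T : ℝ) (hρ : 0 < ρ) (hT : 0 < T)
    (hmass : (∫ v : ℝ, f v) = ρ)
    (htemp : (∫ v : ℝ, (v - u) ^ 2 * f v) = ρ * T)
    (hflogf : Integrable (fun v : ℝ => f v * |Real.log (f v)|))
    (hMlogf : Integrable (fun v : ℝ => maxwellian ρ u T v * |Real.log (f v)|)) :
    (∫ v : ℝ, (maxwellian ρ u T v - f v) * Real.log (f v)) ≤ 0 := by
  have hf : Integrable f := .of_integral_ne_zero (hmass ▸ hρ.ne')
  have hf₂ : Integrable fun v => (v - u) ^ 2 * f v :=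
    .of_integral_ne_zero (htemp ▸ (mul_pos hρ hT).ne')
  have hM_pos := maxwellian_pos (u := u) hρ hT
  refine integral_sub_mul_log_nonpos hf_pos (ae_of_all _ hM_pos) ?_
    (integrable_sub_mul_log_maxwellian hρ hT hf hf₂)
    (integral_sub_mul_log_maxwellian_eq_zero hρ hT hf hf₂ hmass htemp)
  exact integrable_sub_mul_log (hf_pos.mono fun v hv => hv.le) (ae_of_all _ fun v => (hM_pos v).le)
    hf.aestronglyMeasurable (integrable_maxwellian ρ u T).aestronglyMeasurable hflogf hMlogf

theorem bgk_entropy_inequality (f : ℝ → ℝ) (hf_meas : Measurable f)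
    (hf_pos : ∀ᵐ v : ℝ ∂volume, 0 < f v)
    (ρ u T : ℝ) (hρ : 0 < ρ) (hT : 0 < T)
    (hmass : (∫ v : ℝ, f v) = ρ)
    (hmom : (∫ v : ℝ, v * f v) = ρ * u)
    (htemp : (∫ v : ℝ, (v - u) ^ 2 * f v) = ρ * T)
    (hflogf : Integrable (fun v : ℝ => f v * |Real.log (f v)|))
    (hMlogf : Integrable (fun v : ℝ => maxwellian ρ u T v * |Real.log (f v)|))
    (hflogM : Integrable (fun v : ℝ => f v * |Real.log (maxwellian ρ u T v)|))
    (hMlogM : Integrable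
      (fun v : ℝ => maxwellian ρ u T v * |Real.log (maxwellian ρ u T v)|)) :
    (∫ v : ℝ, (maxwellian ρ u T v - f v) * Real.log (f v)) ≤ 0 :=
  bgk_entropy_inequality_general f hf_pos ρ u T hρ hT hmass htemp hflogf hMlogf
end

section
/- Let ρ, u, T : ℝ → ℝ be differentiable at time t with ρ(t) > 0 and T(t) > 0, and let M(t,v) = (ρ(t)/√(2πT(t))) exp(−(v−u(t))²/(2T(t))) be the time-dependent 1D Maxwellian. Then the time derivative ∂ₜM(t,·) is fixed by the projection associated with M(t,·): Π_{M(t,·)}[∂ₜM(t,·)](v) = ∂ₜM(t,v) for all v ∈ ℝ. -/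
/-!
The time derivative of the Maxwellian is a quadratic polynomial in `v - u` times the Maxwellian,
since `log M` is quadratic in `v` with coefficients that depend differentiably on `t`. The
projection `Π_M` is the orthogonal projection, for the weight `M / ρ`, onto the span of the
orthonormal polynomials `1`, `(v - u) / √T`, `√2 ((v - u)² / (2T) - 1/2)` times `M`, so it fixes
every quadratic polynomial times `M`. Checking this only needs the Gaussian moments of order at
most four, which follow from `∫ x ^ (n + 2) e^(-b x²) = (n + 1) / (2b) ∫ x ^ n e^(-b x²)`
(integration by parts) and the vanishing of the odd moments.
-/

open MeasureTheory Real


/-- The 1D micro-macro projection operator `Π_M` associated with the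
Maxwellian `M[ρ,u,T]`. -/
noncomputable def projMax (ρ u T : ℝ) (F : ℝ → ℝ) (v : ℝ) : ℝ :=
  ((1 / ρ) * (∫ w : ℝ, F w)
    + ((v - u) / Real.sqrt T) *
        ((1 / ρ) * ∫ w : ℝ, ((w - u) / Real.sqrt T) * F w)
    + Real.sqrt 2 * ((v - u) ^ 2 / (2 * T) - 1 / 2) *
        ((1 / ρ) * ∫ w : ℝ, Real.sqrt 2 * ((w - u) ^ 2 / (2 * T) - 1 / 2) * F w))
  * maxwellian ρ u T v

section GaussianMoments

variable {b : ℝ}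

theorem integrable_pow_mul_exp_neg_mul_sq (hb : 0 < b) (n : ℕ) :
    Integrable (fun x : ℝ => x ^ n * exp (-b * x ^ 2)) := by
  simpa using integrable_rpow_mul_exp_neg_mul_sq hb (s := n)
    (neg_one_lt_zero.trans_le n.cast_nonneg)

theorem integral_pow_mul_exp_neg_mul_sq_of_odd (b : ℝ) {n : ℕ} (hn : Odd n) :
    ∫ x : ℝ, x ^ n * exp (-b * x ^ 2) = 0 := by
  have hodd : ∀ x : ℝ, (-x) ^ n * exp (-b * (-x) ^ 2) = -(x ^ n * exp (-b * x ^ 2)) := by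
    intro x
    rw [hn.neg_pow, neg_sq, neg_mul]
  have h := integral_neg_eq_self (fun x : ℝ => x ^ n * exp (-b * x ^ 2)) volume
  simp only [hodd, integral_neg] at h
  linarith

theorem integral_pow_add_two_mul_exp_neg_mul_sq (hb : 0 < b) (n : ℕ) :
    ∫ x : ℝ, x ^ (n + 2) * exp (-b * x ^ 2)
      = (n + 1) / (2 * b) * ∫ x : ℝ, x ^ n * exp (-b * x ^ 2) := by
  have hg := integrable_pow_mul_exp_neg_mul_sq hb
  have hderiv : ∀ x : ℝ, HasDerivAt (fun y => y ^ (n + 1) * exp (-b * y ^ 2))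
      ((n + 1) * (x ^ n * exp (-b * x ^ 2)) - 2 * b * (x ^ (n + 2) * exp (-b * x ^ 2))) x := by
    intro x
    refine ((hasDerivAt_pow (n + 1) x).fun_mul
      ((hasDerivAt_pow 2 x).const_mul (-b)).exp).congr_deriv ?_
    push_cast
    ring
  have h := integral_eq_zero_of_hasDerivAt_of_integrable hderiv
    (((hg n).const_mul _).sub ((hg (n + 2)).const_mul _)) (hg (n + 1))
  rw [integral_sub ((hg n).const_mul _) ((hg (n + 2)).const_mul _), integral_const_mul,
    integral_const_mul] at h
  rw [div_mul_eq_mul_div, eq_div_iff (by positivity)]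
  linarith

theorem integral_sq_mul_exp_neg_mul_sq (hb : 0 < b) :
    ∫ x : ℝ, x ^ 2 * exp (-b * x ^ 2) = √(π / b) / (2 * b) := by
  have h := integral_pow_add_two_mul_exp_neg_mul_sq hb 0
  rw [h]
  simp only [pow_zero, one_mul, integral_gaussian]
  push_cast
  ring

theorem integral_pow_four_mul_exp_neg_mul_sq (hb : 0 < b) :
    ∫ x : ℝ, x ^ 4 * exp (-b * x ^ 2) = 3 * √(π / b) / (4 * b ^ 2) := by
  rw [integral_pow_add_two_mul_exp_neg_mul_sq hb 2, integral_sq_mul_exp_neg_mul_sq hb]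
  field_simp
  norm_num

theorem integral_quartic_mul_exp_neg_mul_sq (hb : 0 < b) (a₀ a₁ a₂ a₃ a₄ : ℝ) :
    ∫ x : ℝ, (a₀ + a₁ * x + a₂ * x ^ 2 + a₃ * x ^ 3 + a₄ * x ^ 4) * exp (-b * x ^ 2)
      = (a₀ + a₂ / (2 * b) + 3 * a₄ / (4 * b ^ 2)) * √(π / b) := by
  have i₀ := integrable_exp_neg_mul_sq hb
  have i₁ := integrable_pow_mul_exp_neg_mul_sq hb 1
  have i₂ := integrable_pow_mul_exp_neg_mul_sq hb 2
  have i₃ := integrable_pow_mul_exp_neg_mul_sq hb 3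
  have i₄ := integrable_pow_mul_exp_neg_mul_sq hb 4
  have hsplit :
      (fun x : ℝ => (a₀ + a₁ * x + a₂ * x ^ 2 + a₃ * x ^ 3 + a₄ * x ^ 4) * exp (-b * x ^ 2))
      = fun x => a₀ * exp (-b * x ^ 2) + a₁ * (x ^ 1 * exp (-b * x ^ 2))
          + a₂ * (x ^ 2 * exp (-b * x ^ 2)) + a₃ * (x ^ 3 * exp (-b * x ^ 2))
          + a₄ * (x ^ 4 * exp (-b * x ^ 2)) := by
    funext x; ring
  rw [hsplit, integral_add (by fun_prop) (by fun_prop), integral_add (by fun_prop) (by fun_prop),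
    integral_add (by fun_prop) (by fun_prop), integral_add (by fun_prop) (by fun_prop)]
  simp only [integral_const_mul, integral_gaussian, integral_sq_mul_exp_neg_mul_sq hb,
    integral_pow_four_mul_exp_neg_mul_sq hb,
    integral_pow_mul_exp_neg_mul_sq_of_odd b odd_one,
    integral_pow_mul_exp_neg_mul_sq_of_odd b (by decide : Odd 3)]
  ring

end GaussianMoments

theorem integral_quartic_mul_maxwellian (ρ u : ℝ) {T : ℝ} (hT : 0 < T) (a₀ a₁ a₂ a₃ a₄ : ℝ) :
    ∫ w : ℝ, (a₀ + a₁ * (w - u) + a₂ * (w - u) ^ 2 + a₃ * (w - u) ^ 3 + a₄ * (w - u) ^ 4)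
        * maxwellian ρ u T w
      = ρ * (a₀ + a₂ * T + 3 * a₄ * T ^ 2) := by
  have hb : 0 < (2 * T)⁻¹ := by positivity
  calc _ = ∫ x : ℝ, ρ / √(2 * π * T) *
          ((a₀ + a₁ * x + a₂ * x ^ 2 + a₃ * x ^ 3 + a₄ * x ^ 4) * exp (-(2 * T)⁻¹ * x ^ 2)) := by
        rw [← integral_add_right_eq_self _ u]
        congr 1
        funext x
        rw [maxwellian, add_sub_cancel_right, neg_mul, ← div_eq_inv_mul, neg_div]
        ring
    _ = ρ / √(2 * π * T) * ((a₀ + a₂ / (2 * (2 * T)⁻¹) + 3 * a₄ / (4 * ((2 * T)⁻¹) ^ 2))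
          * √(π / (2 * T)⁻¹)) := by
        rw [integral_const_mul, integral_quartic_mul_exp_neg_mul_sq hb]
    _ = ρ * (a₀ + a₂ * T + 3 * a₄ * T ^ 2) := by
        rw [div_inv_eq_mul, mul_comm π]
        have : √(2 * π * T) ≠ 0 := by positivity
        field_simp
        ring

theorem projMax_quadratic_mul_maxwellian {ρ u T : ℝ} (hρ : ρ ≠ 0) (hT : 0 < T)
    (a b c v : ℝ) :
    projMax ρ u T (fun w => (a + b * (w - u) + c * (w - u) ^ 2) * maxwellian ρ u T w) v
      = (a + b * (v - u) + c * (v - u) ^ 2) * maxwellian ρ u T v := by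
  have h₁ : ∫ w, (a + b * (w - u) + c * (w - u) ^ 2) * maxwellian ρ u T w
      = ρ * (a + c * T + 3 * 0 * T ^ 2) := by
    rw [← integral_quartic_mul_maxwellian ρ u hT a b c 0 0]
    congr 1; funext w; ring
  have h₂ : ∫ w, (w - u) / √T * ((a + b * (w - u) + c * (w - u) ^ 2) * maxwellian ρ u T w)
      = ρ * (0 + b / √T * T + 3 * 0 * T ^ 2) := by
    rw [← integral_quartic_mul_maxwellian ρ u hT 0 (a / √T) (b / √T) (c / √T) 0]
    congr 1; funext w; ring
  have h₃ : ∫ w, √2 * ((w - u) ^ 2 / (2 * T) - 1 / 2) *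
        ((a + b * (w - u) + c * (w - u) ^ 2) * maxwellian ρ u T w)
      = ρ * (√2 * (-a / 2) + √2 * (a / (2 * T) - c / 2) * T + 3 * (√2 * c / (2 * T)) * T ^ 2) := by
    rw [← integral_quartic_mul_maxwellian ρ u hT (√2 * (-a / 2)) (√2 * (-b / 2))
      (√2 * (a / (2 * T) - c / 2)) (√2 * b / (2 * T)) (√2 * c / (2 * T))]
    congr 1; funext w; ring
  simp only [projMax]
  rw [h₁, h₂, h₃]
  have hsT : √T ^ 2 = T := Real.sq_sqrt hT.le
  have hs2 : √2 ^ 2 = 2 := Real.sq_sqrt zero_le_two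
  have : √T ≠ 0 := by positivity
  field_simp
  ring_nf
  rw [hsT, hs2]
  ring

theorem hasDerivAt_maxwellian {ρ u T : ℝ → ℝ} {ρ' u' T' t : ℝ} (hρ : HasDerivAt ρ ρ' t)
    (hu : HasDerivAt u u' t) (hT : HasDerivAt T T' t) (hρ₀ : ρ t ≠ 0) (hT₀ : 0 < T t) (v : ℝ) :
    HasDerivAt (fun s => maxwellian (ρ s) (u s) (T s) v)
      ((ρ' / ρ t - T' / (2 * T t) + u' / T t * (v - u t) + T' / (2 * T t ^ 2) * (v - u t) ^ 2)
        * maxwellian (ρ t) (u t) (T t) v) t := by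
  have hS : 0 < 2 * π * T t := by positivity
  have h := (hρ.div ((hT.const_mul (2 * π)).sqrt hS.ne') (Real.sqrt_pos.2 hS).ne').mul
    ((((hu.const_sub v).pow 2).neg.div (hT.const_mul 2) (by positivity)).exp)
  refine h.congr_deriv ?_
  simp only [maxwellian, Pi.div_apply, Pi.pow_apply, Pi.neg_apply, Nat.cast_ofNat,
    pow_one, Nat.add_one_sub_one]
  have hsS : √(2 * π * T t) ^ 2 = 2 * π * T t := Real.sq_sqrt hS.le
  have : √(2 * π * T t) ≠ 0 := by positivity
  field_simp
  rw [pow_succ, hsS]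
  ring

theorem projMax_fixes_time_derivative (ρ u T : ℝ → ℝ) (t : ℝ)
    (hρd : DifferentiableAt ℝ ρ t) (hud : DifferentiableAt ℝ u t)
    (hTd : DifferentiableAt ℝ T t)
    (hρ : 0 < ρ t) (hT : 0 < T t) :
    ∀ v : ℝ,
      projMax (ρ t) (u t) (T t)
        (fun w : ℝ => deriv (fun s : ℝ => maxwellian (ρ s) (u s) (T s) w) t) v
      = deriv (fun s : ℝ => maxwellian (ρ s) (u s) (T s) v) t := by
  intro v
  have hderiv := fun w =>
    (hasDerivAt_maxwellian hρd.hasDerivAt hud.hasDerivAt hTd.hasDerivAt hρ.ne' hT w).deriv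
  simp only [hderiv]
  exact projMax_quadratic_mul_maxwellian hρ.ne' hT _ _ _ v
end

section
/- Let c > 0, ε > 0, and for Δt > 0 define the TR-BDF2 weight W(Δt) = (48ε² − 10cεΔt)/(48ε² + 14cεΔt + (cΔt)²). Then: (a) −1 < W(Δt) < 1 for every Δt > 0 (stability); (b) W(Δt) → 0 as Δt → ∞ (L-stability); and (c) for any W ∈ ℝ, the pressure-tensor update (P₁₁′, P₁₂′, P₂₂′) = ((1/2)((1+W)P₁₁ + (1−W)P₂₂), W·P₁₂, (1/2)((1−W)P₁₁ + (1+W)P₂₂)) conserves the trace: P₁₁′ + P₂₂′ = P₁₁ + P₂₂. -/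
open Filter

/-- The TR-BDF2 weight for the ES-BGK pressure-tensor relaxation step. -/
noncomputable def trbdf2W (c ε Δt : ℝ) : ℝ :=
  (48 * ε ^ 2 - 10 * c * ε * Δt) /
    (48 * ε ^ 2 + 14 * c * ε * Δt + (c * Δt) ^ 2)

open Topology Polynomial

/-- The amplification factor of the scheme in the dimensionless step `z = c Δt / ε`. -/
noncomputable def trbdf2Factor (z : ℝ) : ℝ :=
  (48 - 10 * z) / (48 + 14 * z + z ^ 2)

lemma trbdf2W_eq_trbdf2Factor (c : ℝ) {ε : ℝ} (hε : ε ≠ 0) (Δt : ℝ) :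
    trbdf2W c ε Δt = trbdf2Factor (c * Δt / ε) := by
  have hnum : 48 - 10 * (c * Δt / ε) = (48 * ε ^ 2 - 10 * c * ε * Δt) / ε ^ 2 := by
    field_simp
  have hden : 48 + 14 * (c * Δt / ε) + (c * Δt / ε) ^ 2 =
      (48 * ε ^ 2 + 14 * c * ε * Δt + (c * Δt) ^ 2) / ε ^ 2 := by
    field_simp
  rw [trbdf2W, trbdf2Factor, hnum, hden, div_div_div_cancel_right₀ (pow_ne_zero 2 hε)]

lemma abs_trbdf2Factor_lt_one {z : ℝ} (hz : 0 < z) : |trbdf2Factor z| < 1 := by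
  have hden : 0 < 48 + 14 * z + z ^ 2 := by positivity
  rw [trbdf2Factor, abs_div, abs_of_pos hden, div_lt_one hden, abs_lt]
  constructor <;> nlinarith

lemma tendsto_trbdf2Factor_atTop : Tendsto trbdf2Factor atTop (𝓝 0) := by
  have hdeg : (C 48 - C 10 * X : ℝ[X]).degree < (C 48 + C 14 * X + X ^ 2 : ℝ[X]).degree := by
    rw [show (C 48 + C 14 * X + X ^ 2 : ℝ[X]).degree = 2 by compute_degree!]
    exact (degree_le_of_natDegree_le (by compute_degree)).trans_lt (by norm_num)
  convert div_tendsto_atTop_zero_of_degree_lt _ _ hdeg using 2 with z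
  simp [trbdf2Factor]

theorem trbdf2_stability (c ε : ℝ) (hc : 0 < c) (hε : 0 < ε) :
    -- (a) stability
    (∀ Δt : ℝ, 0 < Δt → -1 < trbdf2W c ε Δt ∧ trbdf2W c ε Δt < 1) ∧
    -- (b) L-stability
    Tendsto (fun Δt : ℝ => trbdf2W c ε Δt) atTop (nhds 0) ∧
    -- (c) trace conservation of the pressure-tensor update
    (∀ W P₁₁ P₁₂ P₂₂ : ℝ,
      (1 / 2) * ((1 + W) * P₁₁ + (1 - W) * P₂₂)
        + (1 / 2) * ((1 - W) * P₁₁ + (1 + W) * P₂₂) = P₁₁ + P₂₂) := by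
  simp only [trbdf2W_eq_trbdf2Factor c hε.ne']
  refine ⟨fun Δt hΔt => abs_lt.mp (abs_trbdf2Factor_lt_one (by positivity)), ?_,
    fun _ _ _ _ => by ring⟩
  exact tendsto_trbdf2Factor_atTop.comp
    ((tendsto_id.const_mul_atTop hc).atTop_div_const hε)
end
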